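/- Consider a Max-3-DNF instance with n boolean variables and m conjunctive clauses, each a conjunction of three literals. Construct the graph G that is the disjoint union of n 4-cycles (u_i, u_i^t, ū_i, u_i^f), and for each clause C_j define a weight function w^j on edges by: w^j({u_i, u_i^t}) = 1 if ¬x_i ∈ C_j, w^j({u_i, u_i^f}) = 1 if x_i ∈ C_j, and all other edge weights 0. For a truth assignment σ, let M_σ be the corresponding perfect matching (containing {u_i,u_i^t} and {ū_i,u_i^f} iff σ(x_i) = true). Then for each clause C_j, max_{e ∈ M_σ} w^j(e) = 0 if σ satisfies C_j and = 1 otherwise; consequently the number of clauses satisfied by σ equals m − Σ_{j=1}^m max_{e ∈ M_σ} w^j(e). -/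

import Mathlib

/-!
An edge of the matching `M_σ` has weight one for clause `C` exactly when it is the edge of a
literal of `C` that `σ` falsifies: the `¬x_i`-edge `{u_i, u_i^t}` is matched iff `σ i` is true,
the `x_i`-edge `{u_i^f, u_i}` iff `σ i` is false. As all weights lie in `{0, 1}`, the maximum
weight on `M_σ` is the indicator that `C` is unsatisfied, and summing these indicators counts
the unsatisfied clauses.
-/

open Finset

theorem Finset.card_filter_eq_card_sub_sum_ite {ι : Type*} [Fintype ι] (p : ι → Prop)
    [DecidablePred p] :
    #{j | p j} = Fintype.card ι - ∑ j, if p j then 0 else 1 := by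
  have hsum : ∑ j, (if p j then 0 else 1) = #{j | ¬p j} := by
    rw [card_filter]
    exact sum_congr rfl fun j _ => by by_cases h : p j <;> simp [h]
  rw [hsum, ← card_univ]
  exact Nat.eq_sub_of_add_eq (card_filter_add_card_filter_not p)

namespace MaxDNF

variable {n w : ℕ}

def assignmentMatching (σ : Fin n → Bool) : Finset (Fin n × Fin 4) :=
  univ.filter fun e => if σ e.1 then e.2 = 0 ∨ e.2 = 2 else e.2 = 1 ∨ e.2 = 3

def clauseWeight (c : Fin w → Fin n × Bool) (e : Fin n × Fin 4) : ℕ :=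
  if e.2 = 0 ∧ (∃ k, c k = (e.1, false)) then 1
  else if e.2 = 3 ∧ (∃ k, c k = (e.1, true)) then 1 else 0

/-- The edge whose weight records that the literal `l` is falsified. -/
def literalEdge (l : Fin n × Bool) : Fin n × Fin 4 :=
  (l.1, if l.2 then 3 else 0)

theorem literalEdge_mem_assignmentMatching {σ : Fin n → Bool} {l : Fin n × Bool}
    (hl : σ l.1 ≠ l.2) : literalEdge l ∈ assignmentMatching σ := by
  obtain ⟨i, b⟩ := l
  cases b <;> simp_all [literalEdge, assignmentMatching]

theorem clauseWeight_literalEdge (c : Fin w → Fin n × Bool) (k : Fin w) :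
    clauseWeight c (literalEdge (c k)) = 1 := by
  rcases hck : c k with ⟨i, b⟩
  cases b <;> simp [clauseWeight, literalEdge] <;> exact ⟨k, hck⟩

theorem clauseWeight_le_one (c : Fin w → Fin n × Bool) (e : Fin n × Fin 4) :
    clauseWeight c e ≤ 1 := by
  unfold clauseWeight
  split_ifs <;> omega

theorem clauseWeight_eq_zero_of_mem {σ : Fin n → Bool} {c : Fin w → Fin n × Bool}
    (hsat : ∀ k, σ (c k).1 = (c k).2) {e : Fin n × Fin 4} (he : e ∈ assignmentMatching σ) :
    clauseWeight c e = 0 := by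
  obtain ⟨i, a⟩ := e
  simp only [assignmentMatching, mem_filter, mem_univ, true_and] at he
  simp only [clauseWeight]
  split_ifs with h0 h3
  · obtain ⟨rfl, k, hk⟩ := h0
    have := hsat k
    simp_all
  · obtain ⟨rfl, k, hk⟩ := h3
    have := hsat k
    simp_all
  · rfl

theorem sup_clauseWeight (σ : Fin n → Bool) (c : Fin w → Fin n × Bool) :
    (assignmentMatching σ).sup (clauseWeight c) =
      if ∀ k, σ (c k).1 = (c k).2 then 0 else 1 := by
  split_ifs with hsat
  · exact Finset.sup_eq_bot_iff _ _ |>.mpr fun e he => clauseWeight_eq_zero_of_mem hsat he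
  · obtain ⟨k, hk⟩ := not_forall.mp hsat
    refine le_antisymm (Finset.sup_le fun e _ => clauseWeight_le_one c e) ?_
    rw [← clauseWeight_literalEdge c k]
    exact le_sup (literalEdge_mem_assignmentMatching hk)

end MaxDNF

open MaxDNF in
/-- Max-3-DNF to multi-instance min-max perfect matching reduction.
Clauses are `C : Fin m → Fin 3 → Fin n × Bool` (a literal `(i, true)` means `x_i`, and
`(i, false)` means `¬x_i`); `σ` satisfies clause `j` iff all its literals are true.
Edges of the union of 4-cycles are encoded as `(i, a) : Fin n × Fin 4`, where `a = 0` is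
`{u_i, u_i^t}`, `a = 1` is `{u_i^t, ū_i}`, `a = 2` is `{ū_i, u_i^f}`, `a = 3` is
`{u_i^f, u_i}`; the matching `M_σ` consists of edges `0, 2` of cycle `i` when `σ i = true`
and edges `1, 3` otherwise. Weights: `w^j(i,0) = 1` iff `¬x_i ∈ C_j`, `w^j(i,3) = 1` iff
`x_i ∈ C_j`, all other weights `0`. Then `max_{e ∈ M_σ} w^j(e)` is `0` if `σ` satisfies
`C_j` and `1` otherwise, and the number of satisfied clauses equals
`m − Σ_j max_{e ∈ M_σ} w^j(e)`. -/
theorem stmt11 (n m : ℕ) (C : Fin m → Fin 3 → Fin n × Bool) (σ : Fin n → Bool)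
    (Msig : Finset (Fin n × Fin 4))
    (hM : Msig = Finset.univ.filter
      (fun e => if σ e.1 then e.2 = 0 ∨ e.2 = 2 else e.2 = 1 ∨ e.2 = 3))
    (w : Fin m → Fin n × Fin 4 → ℕ)
    (hw : ∀ j i a, w j (i, a) =
      if a = 0 ∧ (∃ k, C j k = (i, false)) then 1
      else if a = 3 ∧ (∃ k, C j k = (i, true)) then 1 else 0) :
    (∀ j : Fin m, Msig.sup (w j) =
      if ∀ k, σ (C j k).1 = (C j k).2 then 0 else 1) ∧
    (Finset.univ.filter (fun j : Fin m => ∀ k, σ (C j k).1 = (C j k).2)).card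
      = m - ∑ j : Fin m, Msig.sup (w j) := by
  obtain rfl : Msig = assignmentMatching σ := hM
  obtain rfl : w = fun j => clauseWeight (C j) := funext fun j => funext fun e => hw j e.1 e.2
  have hsup : ∀ j, (assignmentMatching σ).sup (clauseWeight (C j)) = _ :=
    fun j => sup_clauseWeight σ (C j)
  refine ⟨hsup, ?_⟩
  rw [Fintype.sum_congr _ _ hsup, card_filter_eq_card_sub_sum_ite, Fintype.card_fin]
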